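/- Let p be a prime and M a finite non-abelian p-group whose center Z(M) is cyclic of order p², and let T be the unique subgroup of Z(M) of order p. Suppose the quotient M/T is elementary abelian. Then there exists a subgroup E of M of index p such that T ≤ E, Z(M) is not contained in E, every element of M is a product of an element of Z(M) and an element of E, and E is extraspecial with Z(E) = T. -/

import Mathlib

/-! The elementary abelian group `M/T` is an `𝔽_p`-vector space, so for a central `z ∉ T` there is
a homomorphism `ψ : M → ℤ/p` killing `T` with `ψ z = 1`; let `E = ker ψ`. Then `M = ⟨z⟩E`, hence
`Z(E) = Z(M) ∩ E`, which contains `T` and is proper in `Z(M)` of order `p²`, so it is `T`. Since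
`[E, E] ≤ [M, M] ≤ T` and `E^p ≤ T`, and `E` is non-abelian because `M` is, `E` is extraspecial. -/

namespace SmallRep

/-- A finite `p`-group is extraspecial if its center equals its commutator subgroup,
has order `p`, and the central quotient is a nontrivial elementary abelian `p`-group. -/
def IsExtraspecial (p : ℕ) (E : Type*) [Group E] : Prop :=
  Subgroup.center E = commutator E ∧ Nat.card (Subgroup.center E) = p ∧
  Nontrivial (E ⧸ Subgroup.center E) ∧
  (∀ x y : E ⧸ Subgroup.center E, x * y = y * x) ∧
  (∀ x : E ⧸ Subgroup.center E, x ^ p = 1)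

open Subgroup

open scoped IsMulCommutative in
lemma exists_monoidHom_zmod_apply_eq_ofAdd_one {p : ℕ} [Fact p.Prime] {G : Type*} [Group G]
    [IsMulCommutative G] (hexp : ∀ x : G, x ^ p = 1) {a : G} (ha : a ≠ 1) :
    ∃ φ : G →* Multiplicative (ZMod p), φ a = Multiplicative.ofAdd 1 := by
  have : Module (ZMod p) (Additive G) :=
    AddCommGroup.zmodModule fun x => congrArg Additive.ofMul (hexp x.toMul)
  obtain ⟨f, hf⟩ := Module.Projective.exists_dual_eq_one (ZMod p) (V := Additive G)
    (x := Additive.ofMul a) ha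
  exact ⟨AddMonoidHom.toMultiplicativeRight f.toAddMonoidHom, congrArg Multiplicative.ofAdd hf⟩

lemma exists_monoidHom_zmod_le_ker_apply_eq_ofAdd_one {p : ℕ} [Fact p.Prime] {G : Type*}
    [Group G] {N : Subgroup G} [N.Normal] [IsMulCommutative (G ⧸ N)]
    (hexp : ∀ x : G ⧸ N, x ^ p = 1) {a : G} (ha : a ∉ N) :
    ∃ ψ : G →* Multiplicative (ZMod p), N ≤ ψ.ker ∧ ψ a = Multiplicative.ofAdd 1 := by
  obtain ⟨φ, hφ⟩ := exists_monoidHom_zmod_apply_eq_ofAdd_one hexp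
    (mt (QuotientGroup.eq_one_iff a).mp ha)
  refine ⟨φ.comp (QuotientGroup.mk' N), fun x hx => ?_, hφ⟩
  simp [(QuotientGroup.eq_one_iff x).mpr hx]

section KernelOfCentralCharacter

variable {G : Type*} [Group G] {n : ℕ} [NeZero n] {ψ : G →* Multiplicative (ZMod n)} {z : G}

lemma map_pow_val_toAdd (hψz : ψ z = Multiplicative.ofAdd 1) (y : Multiplicative (ZMod n)) :
    ψ (z ^ y.toAdd.val) = y := by
  rw [map_pow, hψz, ← ofAdd_nsmul, nsmul_one, ZMod.natCast_zmod_val, ofAdd_toAdd]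

lemma index_ker_of_apply_eq_ofAdd_one (hψz : ψ z = Multiplicative.ofAdd 1) : ψ.ker.index = n := by
  rw [index_ker, MonoidHom.range_eq_top.mpr fun y => ⟨_, map_pow_val_toAdd hψz y⟩,
    card_top, Nat.card_eq_fintype_card, Fintype.card_multiplicative, ZMod.card]

lemma exists_eq_mem_center_mul_mem_ker (hz : z ∈ center G) (hψz : ψ z = Multiplicative.ofAdd 1)
    (g : G) : ∃ c ∈ center G, ∃ e ∈ ψ.ker, g = c * e := by
  refine ⟨z ^ (ψ g).toAdd.val, pow_mem hz _, _, ?_, (mul_inv_cancel_left _ g).symm⟩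
  rw [MonoidHom.mem_ker, map_mul, map_inv, map_pow_val_toAdd hψz, inv_mul_cancel]

end KernelOfCentralCharacter

section CentralProduct

variable {G : Type*} [Group G] {E : Subgroup G}

lemma map_subtype_center_eq_center_inf (hdec : ∀ g : G, ∃ c ∈ center G, ∃ e ∈ E, g = c * e) :
    (center E).map E.subtype = center G ⊓ E := by
  ext x
  constructor
  · rintro ⟨e, he, rfl⟩
    refine ⟨mem_center_iff.mpr fun g => ?_, e.2⟩
    obtain ⟨c, hc, w, hw, rfl⟩ := hdec g
    have hwe : Commute w e := congrArg Subtype.val (mem_center_iff.mp he ⟨w, hw⟩)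
    have hce : Commute c e := (mem_center_iff.mp hc e).symm
    exact (hce.mul_left hwe).eq
  · rintro ⟨hxc, hxE⟩
    exact ⟨⟨x, hxE⟩, mem_center_iff.mpr fun g => Subtype.ext (mem_center_iff.mp hxc g), rfl⟩

lemma mul_comm_of_forall_mul_comm (hdec : ∀ g : G, ∃ c ∈ center G, ∃ e ∈ E, g = c * e)
    (hE : ∀ e ∈ E, ∀ f ∈ E, e * f = f * e) (a b : G) :
    a * b = b * a := by
  obtain ⟨c, hc, e, he, rfl⟩ := hdec a
  obtain ⟨d, hd, f, hf, rfl⟩ := hdec b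
  rw [mem_center_iff] at hc hd
  have hcdf : Commute c (d * f) := (hc _).symm
  have hed : Commute e d := hd e
  exact hcdf.mul_left (hed.mul_right (hE e he f hf))

end CentralProduct

lemma eq_of_le_of_lt_of_card_eq_sq {G : Type*} [Group G] {p : ℕ} (hp : p.Prime)
    {T K Z : Subgroup G} (hTK : T ≤ K) (hKZ : K < Z) (hT : Nat.card T = p)
    (hZ : Nat.card Z = p ^ 2) : K = T := by
  have : Finite Z := Nat.finite_of_card_ne_zero (by simp [hZ, hp.ne_zero])
  obtain ⟨i, hi, hK⟩ := (Nat.dvd_prime_pow hp).mp (hZ ▸ card_dvd_of_le hKZ.le)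
  have hpK : p ∣ p ^ i := hK ▸ hT ▸ card_dvd_of_le hTK
  have hK' : Nat.card K = p := by
    interval_cases i
    · simp [Nat.dvd_one, hp.ne_one] at hpK
    · simpa using hK
    · exact absurd (eq_of_le_of_card_ge hKZ.le (hZ ▸ hK.ge)) hKZ.ne
  have : Finite K := Nat.finite_of_card_ne_zero (by simp [hK', hp.ne_zero])
  exact (eq_of_le_of_card_ge hTK (hT ▸ hK'.le)).symm

lemma commutator_le_center_of_commutator_le_map_center {G : Type*} [Group G] {E : Subgroup G}
    (h : commutator G ≤ (center E).map E.subtype) : commutator E ≤ center E := by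
  rw [← map_le_map_iff_of_injective E.subtype_injective, commutator_def, map_commutator,
    ← MonoidHom.range_eq_map, range_subtype]
  exact (commutator_mono le_top le_top).trans h

lemma isExtraspecial_of_commutator_le_center {p : ℕ} (hp : p.Prime) {E : Type*} [Group E]
    (hcard : Nat.card (center E) = p) (hnc : ∃ a b : E, a * b ≠ b * a)
    (hcomm : commutator E ≤ center E) (hpow : ∀ e : E, e ^ p ∈ center E) :
    IsExtraspecial p E := by
  obtain ⟨a, b, hab⟩ := hnc
  have : Finite (center E) := Nat.finite_of_card_ne_zero (by simp [hcard, hp.ne_zero])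
  have hcommCard : Nat.card (commutator E) = p := by
    refine (hp.eq_one_or_self_of_dvd _ (hcard ▸ card_dvd_of_le hcomm)).resolve_left fun h => ?_
    rw [card_eq_one, commutator_eq_bot_iff, isMulCommutative_iff] at h
    exact hab (h a b)
  have : IsMulCommutative (E ⧸ center E) := Normal.quotient_commutative_iff_commutator_le.mpr hcomm
  refine ⟨(eq_of_le_of_card_ge hcomm (hcard ▸ hcommCard.ge)).symm, hcard,
    ⟨⟨b, 1, fun h => hab ?_⟩⟩, isMulCommutative_iff.mp this, fun x => ?_⟩
  · exact mem_center_iff.mp ((QuotientGroup.eq_one_iff b).mp h) a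
  · induction x using QuotientGroup.induction_on with
    | H e => exact (QuotientGroup.eq_one_iff _).mpr (hpow e)

theorem exists_extraspecial_complement_general
    (p : ℕ) (hp : p.Prime) (M : Type*) [Group M]
    (hnab : ∃ a b : M, a * b ≠ b * a)
    (hord : Nat.card (Subgroup.center M) = p ^ 2)
    (T : Subgroup M) [T.Normal] (hTle : T ≤ Subgroup.center M)
    (hTcard : Nat.card T = p)
    (habelian : ∀ x y : M ⧸ T, x * y = y * x)
    (hexp : ∀ x : M ⧸ T, x ^ p = 1) :
    ∃ E : Subgroup M, E.index = p ∧ T ≤ E ∧ ¬ Subgroup.center M ≤ E ∧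
      (∀ m : M, ∃ c ∈ Subgroup.center M, ∃ e ∈ E, m = c * e) ∧
      IsExtraspecial p E ∧ (Subgroup.center E).map E.subtype = T := by
  have := Fact.mk hp
  have : IsMulCommutative (M ⧸ T) := isMulCommutative_iff.mpr habelian
  have hTZ : T < center M := hTle.lt_of_ne fun h => by
    have : p ^ 2 = p := hord.symm.trans (h ▸ hTcard)
    simp [Nat.pow_eq_self_iff hp.one_lt] at this
  obtain ⟨z, hzZ, hzT⟩ := SetLike.exists_of_lt hTZ
  obtain ⟨ψ, hTψ, hψz⟩ := exists_monoidHom_zmod_le_ker_apply_eq_ofAdd_one hexp hzT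
  have hzE : z ∉ ψ.ker := by simp [hψz]
  have hdec := exists_eq_mem_center_mul_mem_ker hzZ hψz
  have hZE : (center ψ.ker).map ψ.ker.subtype = T := by
    rw [map_subtype_center_eq_center_inf hdec]
    exact eq_of_le_of_lt_of_card_eq_sq hp (le_inf hTle hTψ)
      (inf_le_left.lt_of_ne fun h => hzE (h ▸ hzZ).2) hTcard hord
  have hcommE : commutator ψ.ker ≤ center ψ.ker :=
    commutator_le_center_of_commutator_le_map_center
      (hZE ▸ Normal.quotient_commutative_iff_commutator_le.mp ‹_›)
  have hpowE (e : ψ.ker) : e ^ p ∈ center ψ.ker := by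
    rw [← mem_map_iff_mem ψ.ker.subtype_injective, hZE, map_pow]
    exact (QuotientGroup.eq_one_iff _).mp (hexp e)
  refine ⟨ψ.ker, index_ker_of_apply_eq_ofAdd_one hψz, hTψ, fun h => hzE (h hzZ), hdec,
    isExtraspecial_of_commutator_le_center hp ?_ ?_ hcommE hpowE, hZE⟩
  · rw [← card_map_of_injective ψ.ker.subtype_injective, hZE, hTcard]
  · by_contra! h
    obtain ⟨a, b, hab⟩ := hnab
    exact hab (mul_comm_of_forall_mul_comm hdec (fun e he f hf => congrArg Subtype.val
      (h ⟨e, he⟩ ⟨f, hf⟩)) a b)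

/-- Let `M` be a finite non-abelian `p`-group whose center is cyclic of order `p²`, let `T`
be the unique subgroup of the center of order `p`, and suppose `M/T` is elementary abelian.
Then `M` has a subgroup `E` of index `p` containing `T` but not the center, with
`M = Z(M)·E`, which is extraspecial with center `T`. -/
theorem exists_extraspecial_complement
    (p : ℕ) (hp : p.Prime) (M : Type*) [Group M] [Finite M]
    (hpM : IsPGroup p M) (hnab : ∃ a b : M, a * b ≠ b * a)
    (hcyc : IsCyclic (Subgroup.center M))
    (hord : Nat.card (Subgroup.center M) = p ^ 2)
    (T : Subgroup M) [T.Normal] (hTle : T ≤ Subgroup.center M)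
    (hTcard : Nat.card T = p)
    (hTuniq : ∀ T' : Subgroup M, T' ≤ Subgroup.center M → Nat.card T' = p → T' = T)
    (habelian : ∀ x y : M ⧸ T, x * y = y * x)
    (hexp : ∀ x : M ⧸ T, x ^ p = 1) :
    ∃ E : Subgroup M, E.index = p ∧ T ≤ E ∧ ¬ Subgroup.center M ≤ E ∧
      (∀ m : M, ∃ c ∈ Subgroup.center M, ∃ e ∈ E, m = c * e) ∧
      IsExtraspecial p E ∧ (Subgroup.center E).map E.subtype = T :=
  exists_extraspecial_complement_general p hp M hnab hord T hTle hTcard habelian hexp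

end SmallRep
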